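/- arXiv:1802.03076 — 3 statements merged into one kernel-verified Lean document; each statement's English description precedes it below -/
import Mathlib

section
/- Let G be a group and k a commutative ring. For each n ≥ 0 there is a k-module isomorphism between the strictly autopoietic cochains AP(k[G]^{⊗n}) and Hom_k(k[N_n^{cy}(G, e)], k), given by f ↦ Φ(f) with Φ(f)(g_0 ⊗ ⋯ ⊗ g_n) = ⟨g_0, f(g_1 ⊗ ⋯ ⊗ g_n)⟩, with inverse Ψ sending α to the cochain Ψ(α)(g_1 ⊗ ⋯ ⊗ g_n) = α((g_1⋯g_n)^{-1} ⊗ g_1 ⊗ ⋯ ⊗ g_n) · (g_1 g_2 ⋯ g_n). -/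
open MonoidAlgebra

variable {k G : Type} [CommRing k] [Group G]

/-- Hochschild cochains on the group ring, modeled by values on basis tuples;
this is `Hom_k(k[G]^{⊗n}, k[G])`. -/
abbrev GCochain (k G : Type) [CommRing k] [Group G] (n : ℕ) : Type :=
  (Fin n → G) → MonoidAlgebra k G

/-- Merge the `i`-th and `(i+1)`-st entries of a tuple. -/
def gmerge {n : ℕ} (g : Fin (n + 1) → G) (i : Fin n) : Fin n → G := fun j =>
  if (j : ℕ) < i then g j.castSucc
  else if (j : ℕ) = i then g j.castSucc * g j.succ
  else g j.succ

/-- The Hochschild coboundary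
`(δf)(g_1,…,g_{n+1}) = g_1 f(g_2,…,g_{n+1}) + Σ_{i=1}^{n} (-1)^i f(g_1,…,g_i g_{i+1},…,g_{n+1})
  + (-1)^{n+1} f(g_1,…,g_n) g_{n+1}`. -/
noncomputable def gdelta (k G : Type) [CommRing k] [Group G] (n : ℕ) :
    GCochain k G n →ₗ[k] GCochain k G (n + 1) :=
  (LinearMap.pi fun g =>
      (LinearMap.mulLeft k (single (g 0) (1 : k))).comp (LinearMap.proj (Fin.tail g)))
  + (∑ i : Fin n, ((-1 : k) ^ ((i : ℕ) + 1)) •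
      LinearMap.pi fun g => LinearMap.proj (gmerge g i))
  + ((-1 : k) ^ (n + 1)) •
      LinearMap.pi fun g =>
        (LinearMap.mulRight k (single (g (Fin.last n)) (1 : k))).comp
          (LinearMap.proj (Fin.init g))

/-- Cochains on the cyclic bar construction: `Hom_k(k[G]^{⊗(n+1)}, k)`. -/
abbrev CyCochain (k G : Type) [CommRing k] [Group G] (n : ℕ) : Type :=
  (Fin (n + 1) → G) → k

/-- The `i`-th face of the cyclic bar construction; the last face is
`(g_0,…,g_{n+1}) ↦ (g_{n+1} g_0, g_1, …, g_n)`. -/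
def cycFace {n : ℕ} (i : ℕ) (g : Fin (n + 2) → G) : Fin (n + 1) → G :=
  if i = n + 1 then
    fun j => if (j : ℕ) = 0 then g (Fin.last (n + 1)) * g 0 else g j.castSucc
  else
    fun j => if (j : ℕ) < i then g j.castSucc
      else if (j : ℕ) = i then g j.castSucc * g j.succ
      else g j.succ

/-- `b^*`, the `Hom_k(-,k)`-dual of the cyclic Hochschild boundary `b`. -/
noncomputable def bstar (k G : Type) [CommRing k] [Group G] (n : ℕ) :
    CyCochain k G n →ₗ[k] CyCochain k G (n + 1) :=
  ∑ i ∈ Finset.range (n + 2), ((-1 : k) ^ i) •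
    LinearMap.pi fun g => LinearMap.proj (cycFace i g)

/-- `Φ_n(f)(g_0 ⊗ ⋯ ⊗ g_n) = ⟨g_0, f(g_1 ⊗ ⋯ ⊗ g_n)⟩`, where `⟨g,h⟩ = 1` iff `h = g⁻¹`
(i.e. the coefficient of `(g_0)⁻¹` in `f(g_1 ⊗ ⋯ ⊗ g_n)`). -/
def PhiMap {n : ℕ} (f : GCochain k G n) : CyCochain k G n :=
  fun g => (f (Fin.tail g)).coeff ((g 0)⁻¹)

/-- The ordered product of a tuple of group elements. -/
def gprod {n : ℕ} (g : Fin n → G) : G := (List.ofFn g).prod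

/-- The submodule of (strictly) autopoietic cochains: those with
`f(g_1 ⊗ ⋯ ⊗ g_n) = λ_{g_1,…,g_n} · (g_1 g_2 ⋯ g_n)`. -/
noncomputable def APsub (k G : Type) [CommRing k] [Group G] (n : ℕ) : Submodule k (GCochain k G n) where
  carrier := {f | ∀ g : Fin n → G, ∃ c : k, f g = c • single (gprod g) (1 : k)}
  add_mem' := by
    intro f f' hf hf' g
    obtain ⟨c, hc⟩ := hf g
    obtain ⟨c', hc'⟩ := hf' g
    exact ⟨c + c', by simp [hc, hc', add_smul]⟩
  zero_mem' := fun g => ⟨0, by simp⟩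
  smul_mem' := by
    intro c f hf g
    obtain ⟨c', hc'⟩ := hf g
    exact ⟨c * c', by simp [hc', mul_smul]⟩

/-- `N_n^{cy}(G,e)`: tuples `(g_0,…,g_n)` with `g_0 g_1 ⋯ g_n = e`. -/
def NcyE (G : Type) [Group G] (n : ℕ) : Type :=
  {g : Fin (n + 1) → G // (List.ofFn g).prod = 1}

lemma iota_prod {n : ℕ} (g : Fin n → G) :
    (List.ofFn (Fin.cons (gprod g)⁻¹ g : Fin (n + 1) → G)).prod = 1 := by
  rw [List.ofFn_succ]
  simp [gprod]

/-- `Φ(f)(g_0 ⊗ ⋯ ⊗ g_n) = ⟨g_0, f(g_1 ⊗ ⋯ ⊗ g_n)⟩`, restricted to `k[N_n^{cy}(G,e)]`. -/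
def PhiAP {n : ℕ} (f : APsub k G n) : NcyE G n → k :=
  fun g => (f.1 (Fin.tail g.1)).coeff ((g.1 0)⁻¹)

/-- `Ψ(α)(g_1 ⊗ ⋯ ⊗ g_n) = α((g_1⋯g_n)⁻¹ ⊗ g_1 ⊗ ⋯ ⊗ g_n) · (g_1 g_2 ⋯ g_n)`. -/
noncomputable def PsiAP {n : ℕ} (α : NcyE G n → k) : APsub k G n :=
  ⟨fun g => α ⟨Fin.cons (gprod g)⁻¹ g, iota_prod g⟩ • single (gprod g) (1 : k),
   fun g => ⟨α ⟨Fin.cons (gprod g)⁻¹ g, iota_prod g⟩, rfl⟩⟩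

/-
Everything is pointwise in the tuple: a point of `N_n^{cy}(G,e)` is determined by its last `n`
coordinates, the first one being forced to be `(g_1 ⋯ g_n)⁻¹`, and an autopoietic cochain is
determined on `(g_1, …, g_n)` by the single coefficient of `g_1 ⋯ g_n`, which `Φ` reads off at
exactly that point. Additivity and homogeneity of `Φ` hold definitionally.
-/

lemma gprod_cons {n : ℕ} (a : G) (g : Fin n → G) :
    gprod (Fin.cons a g : Fin (n + 1) → G) = a * gprod g := by
  simp [gprod, List.ofFn_succ]

namespace NcyE

variable {n : ℕ}

def ofTail (g : Fin n → G) : NcyE G n :=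
  ⟨Fin.cons (gprod g)⁻¹ g, iota_prod g⟩

lemma gprod_tail (g : NcyE G n) : gprod (Fin.tail g.1) = (g.1 0)⁻¹ := by
  have hg : (g.1 0) * gprod (Fin.tail g.1) = 1 := by
    rw [← gprod_cons, Fin.cons_self_tail]
    exact g.2
  exact eq_inv_of_mul_eq_one_right hg

lemma ofTail_tail (g : NcyE G n) : ofTail (Fin.tail g.1) = g :=
  Subtype.ext <| by
    change Fin.cons (gprod (Fin.tail g.1))⁻¹ (Fin.tail g.1) = g.1
    rw [gprod_tail, inv_inv, Fin.cons_self_tail]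

end NcyE

section

variable {n : ℕ}

lemma APsub.eq_coeff_smul_single (f : APsub k G n) (g : Fin n → G) :
    f.1 g = (f.1 g).coeff (gprod g) • single (gprod g) (1 : k) := by
  obtain ⟨c, hc⟩ := f.2 g
  simp [hc]

lemma PsiAP_apply (α : NcyE G n → k) (g : Fin n → G) :
    (PsiAP α).1 g = α (NcyE.ofTail g) • single (gprod g) (1 : k) :=
  rfl

lemma PhiAP_ofTail (f : APsub k G n) (g : Fin n → G) :
    PhiAP f (NcyE.ofTail g) = (f.1 g).coeff (gprod g) := by
  simp [PhiAP, NcyE.ofTail, Fin.tail_cons]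

lemma PsiAP_PhiAP (f : APsub k G n) : PsiAP (PhiAP f) = f :=
  Subtype.ext <| funext fun g => by
    rw [PsiAP_apply, PhiAP_ofTail, ← APsub.eq_coeff_smul_single]

lemma PhiAP_PsiAP (α : NcyE G n → k) : PhiAP (PsiAP α) = α :=
  funext fun g => by
    change ((PsiAP α).1 (Fin.tail g.1)).coeff ((g.1 0)⁻¹) = α g
    simp [PsiAP_apply, NcyE.gprod_tail, NcyE.ofTail_tail]

end

/-- For each `n ≥ 0`, `Φ` is a `k`-module isomorphism from the strictly
autopoietic cochains `AP(k[G]^{⊗n})` onto `Hom_k(k[N_n^{cy}(G,e)], k)`, with inverse `Ψ`. -/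
theorem stmt_3 :
    (∀ n : ℕ, Function.LeftInverse (PsiAP (k := k) (G := G) (n := n)) PhiAP) ∧
    (∀ n : ℕ, Function.RightInverse (PsiAP (k := k) (G := G) (n := n)) PhiAP) ∧
    (∀ (n : ℕ) (f f' : APsub k G n), PhiAP (f + f') = PhiAP f + PhiAP f') ∧
    (∀ (n : ℕ) (c : k) (f : APsub k G n), PhiAP (c • f) = c • PhiAP f) :=
  ⟨fun _ => PsiAP_PhiAP, fun _ => PhiAP_PsiAP, fun _ _ _ => rfl, fun _ _ _ => rfl⟩
end

section
/- Let G be a group and k a commutative ring. The Hochschild cochain complex splits as a direct sum of cochain complexes Hom_k(k[G]^{⊗*}, k[G]) ≅ AP(k[G]^{⊗*}) ⊕ NP(k[G]^{⊗*}), where every cochain f decomposes uniquely as f = f_1 + f_2 with f_1 strictly autopoietic (f_1(g_1 ⊗ ⋯ ⊗ g_n) = π_{g_1⋯g_n}(f(g_1 ⊗ ⋯ ⊗ g_n))·(g_1⋯g_n)) and f_2 non-autopoietic, and both summands are closed under the Hochschild coboundary δ. -/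
open MonoidAlgebra

variable {k G : Type} [CommRing k] [Group G]

/-- A cochain is (strictly) autopoietic if `f(g_1 ⊗ ⋯ ⊗ g_n) = λ_{g_1,…,g_n}·(g_1 g_2 ⋯ g_n)`
(in degree `0`, `f(1) = λ·e`). -/
def IsAP {n : ℕ} (f : GCochain k G n) : Prop :=
  ∀ g : Fin n → G, ∃ c : k, f g = c • single (gprod g) (1 : k)

/-- A cochain is non-autopoietic if the coefficient of `g_1 g_2 ⋯ g_n` in
`f(g_1 ⊗ ⋯ ⊗ g_n)` vanishes for every tuple (in degree `0`, the coefficient of `e`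
in `f(1)` vanishes). -/
def IsNP {n : ℕ} (f : GCochain k G n) : Prop :=
  ∀ g : Fin n → G, (f g).coeff (gprod g) = 0

/-- The (strictly) autopoietic part of a cochain:
`π(f)(g_1 ⊗ ⋯ ⊗ g_n) = π_{g_1⋯g_n}(f(g_1 ⊗ ⋯ ⊗ g_n))·(g_1⋯g_n)`. -/
noncomputable def apPart {n : ℕ} (f : GCochain k G n) : GCochain k G n :=
  fun g => (f g).coeff (gprod g) • single (gprod g) (1 : k)

/-! The projection `apPart` commutes with `δ`. Left multiplication by `g₁`, right multiplication by
`gₙ₊₁` and merging two neighbours all carry the product of the shorter tuple to `g₁⋯gₙ₊₁`, so the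
coefficient of `g₁⋯gₙ₊₁` in `(δf)(g)` is the alternating sum of the diagonal coefficients of `f`,
which is exactly what `δ (apPart f)` puts in front of `g₁⋯gₙ₊₁`. Hence `apPart` is an idempotent
cochain map whose image is AP and whose kernel is NP. -/

lemma gprod_eq_head_mul_tail {n : ℕ} (g : Fin (n + 1) → G) :
    gprod g = g 0 * gprod (Fin.tail g) := by
  rw [gprod, List.ofFn_succ, List.prod_cons]; rfl

lemma gprod_eq_init_mul_last {n : ℕ} (g : Fin (n + 1) → G) :
    gprod g = gprod (Fin.init g) * g (Fin.last n) := by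
  rw [gprod, List.ofFn_succ', List.concat_eq_append, List.prod_append, List.prod_cons,
    List.prod_nil, mul_one]; rfl

lemma gmerge_zero {n : ℕ} (g : Fin (n + 2) → G) :
    gmerge g 0 = Fin.cons (g 0 * g 1) (fun j : Fin n => g j.succ.succ) := by
  funext j
  refine Fin.cases ?_ (fun j => ?_) j <;> simp [gmerge]

lemma gmerge_succ {n : ℕ} (g : Fin (n + 2) → G) (j : Fin n) :
    gmerge g j.succ = Fin.cons (g 0) (gmerge (Fin.tail g) j) := by
  funext i
  refine Fin.cases (by simp [gmerge]) (fun i => ?_) i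
  simp only [Fin.cons_succ, gmerge, Fin.tail, Fin.val_succ, Nat.add_lt_add_iff_right,
    Nat.add_right_cancel_iff, Fin.succ_castSucc]

lemma gprod_gmerge {n : ℕ} (g : Fin (n + 1) → G) (i : Fin n) : gprod (gmerge g i) = gprod g := by
  induction n with
  | zero => exact i.elim0
  | succ n ih =>
    refine Fin.cases ?_ (fun j => ?_) i
    · rw [gmerge_zero, gprod_eq_head_mul_tail, gprod_eq_head_mul_tail g,
        gprod_eq_head_mul_tail (Fin.tail g), ← mul_assoc]
      rfl
    · rw [gmerge_succ, gprod_eq_head_mul_tail, Fin.tail_cons, Fin.cons_zero, ih,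
        ← gprod_eq_head_mul_tail]

lemma gdelta_apply {n : ℕ} (f : GCochain k G n) (g : Fin (n + 1) → G) :
    gdelta k G n f g =
      single (g 0) (1 : k) * f (Fin.tail g)
        + ∑ i : Fin n, (-1 : k) ^ ((i : ℕ) + 1) • f (gmerge g i)
        + (-1 : k) ^ (n + 1) • (f (Fin.init g) * single (g (Fin.last n)) (1 : k)) := by
  simp [gdelta, LinearMap.sum_apply, Finset.sum_apply]

lemma coeff_gdelta_apply_gprod {n : ℕ} (f : GCochain k G n) (g : Fin (n + 1) → G) :
    (gdelta k G n f g).coeff (gprod g) =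
      (f (Fin.tail g)).coeff (gprod (Fin.tail g))
        + ∑ i : Fin n, (-1 : k) ^ ((i : ℕ) + 1) * (f (gmerge g i)).coeff (gprod (gmerge g i))
        + (-1 : k) ^ (n + 1) * (f (Fin.init g)).coeff (gprod (Fin.init g)) := by
  rw [gdelta_apply, coeff_add, coeff_add, Finsupp.add_apply, Finsupp.add_apply]
  congr 1; congr 1
  · rw [gprod_eq_head_mul_tail g, coeff_single_mul_mul, one_mul]
  · simp [gprod_gmerge]
  · rw [gprod_eq_init_mul_last g]
    simp

lemma apPart_apply {n : ℕ} (f : GCochain k G n) (g : Fin n → G) :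
    apPart f g = single (gprod g) ((f g).coeff (gprod g)) := by
  rw [apPart, smul_single, smul_eq_mul, mul_one]

lemma apPart_gdelta {n : ℕ} (f : GCochain k G n) :
    apPart (gdelta k G n f) = gdelta k G n (apPart f) := by
  funext g
  rw [apPart, coeff_gdelta_apply_gprod, gdelta_apply, add_smul, add_smul, Finset.sum_smul]
  simp only [apPart]
  congr 1; congr 1
  · rw [mul_smul_comm, single_mul_single, one_mul, ← gprod_eq_head_mul_tail]
  · simp only [gprod_gmerge, smul_smul]
  · rw [smul_mul_assoc, single_mul_single, one_mul, ← gprod_eq_init_mul_last, smul_smul]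

lemma apPart_add {n : ℕ} (f₁ f₂ : GCochain k G n) :
    apPart (f₁ + f₂) = apPart f₁ + apPart f₂ := by
  funext g; simp [apPart_apply]

lemma apPart_sub {n : ℕ} (f₁ f₂ : GCochain k G n) :
    apPart (f₁ - f₂) = apPart f₁ - apPart f₂ := by
  funext g; simp [apPart_apply]

lemma apPart_apPart {n : ℕ} (f : GCochain k G n) : apPart (apPart f) = apPart f := by
  funext g; simp [apPart_apply]

lemma isAP_iff_apPart_eq {n : ℕ} {f : GCochain k G n} : IsAP f ↔ apPart f = f := by
  refine ⟨fun hf => funext fun g => ?_, fun hf g => ⟨_, (congrFun hf g).symm⟩⟩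
  obtain ⟨c, hc⟩ := hf g
  simp [apPart_apply, hc]

lemma isNP_iff_apPart_eq_zero {n : ℕ} {f : GCochain k G n} : IsNP f ↔ apPart f = 0 := by
  simp [IsNP, funext_iff, apPart_apply]

/-- The Hochschild cochain complex splits as the direct sum of cochain
complexes `AP(k[G]^{⊗*}) ⊕ NP(k[G]^{⊗*})`: every cochain `f` decomposes uniquely as
`f = f₁ + f₂` with `f₁` strictly autopoietic (given by the stated formula) and `f₂`
non-autopoietic, and both summands are closed under the Hochschild coboundary `δ`. -/
theorem stmt_6 :
    (∀ (n : ℕ) (f : GCochain k G n),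
      IsAP (apPart f) ∧ IsNP (f - apPart f) ∧ f = apPart f + (f - apPart f) ∧
      (∀ f₁ f₂ : GCochain k G n,
        IsAP f₁ → IsNP f₂ → f = f₁ + f₂ → f₁ = apPart f ∧ f₂ = f - apPart f)) ∧
    (∀ (n : ℕ) (f : GCochain k G n), IsAP f → IsAP (gdelta k G n f)) ∧
    (∀ (n : ℕ) (f : GCochain k G n), IsNP f → IsNP (gdelta k G n f)) := by
  refine ⟨fun n f => ⟨?_, ?_, (add_sub_cancel _ _).symm, ?_⟩, fun n f hf => ?_, fun n f hf => ?_⟩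
  · exact isAP_iff_apPart_eq.2 (apPart_apPart f)
  · rw [isNP_iff_apPart_eq_zero, apPart_sub, apPart_apPart, sub_self]
  · rintro f₁ f₂ h₁ h₂ rfl
    have hsplit : apPart (f₁ + f₂) = f₁ := by
      rw [apPart_add, isAP_iff_apPart_eq.1 h₁, isNP_iff_apPart_eq_zero.1 h₂, add_zero]
    exact ⟨hsplit.symm, by rw [hsplit, add_sub_cancel_left]⟩
  · rw [isAP_iff_apPart_eq, apPart_gdelta, isAP_iff_apPart_eq.1 hf]
  · rw [isNP_iff_apPart_eq_zero, apPart_gdelta, isNP_iff_apPart_eq_zero.1 hf, map_zero]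
end

section
/- Let C be an amalgam of groups G_1,...,G_N over a finite poset P without cycles, and k[C] its category algebra over a commutative ring k. Then restriction induces a k-module isomorphism AP(k[C]^{⊗n}, k[C]) ≅ AP(k[C]^{⊗_E n}, k[C]) between autopoietic Hochschild cochains defined on the full tensor power over k and those defined on the tensor power over the separable subalgebra E of object idempotents. -/
/-! An autopoietic cochain sends a tuple to a scalar multiple of the product of its basis
elements. On a non-composable tuple some adjacent pair has structure constant `0`, so that product
vanishes. Hence restriction to composable tuples is injective, and extension by zero inverts it. -/

open scoped Classical

variable {k : Type} [CommRing k] {P : Type} [PartialOrder P] [Fintype P]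
variable {Gr : P → Type} [∀ i, Group (Gr i)]

/-- The morphisms of the amalgam category `C`: endomorphisms `Mor(i,i) = G_i`, and a
unique morphism `e_{ij}` for each pair `i ≺ j`. -/
abbrev Mor (P : Type) [PartialOrder P] (Gr : P → Type) : Type :=
  (Σ i : P, Gr i) ⊕ {p : P × P // p.1 < p.2}

/-- The source (domain) of a morphism. -/
def msrc : Mor P Gr → P
  | .inl ⟨i, _⟩ => i
  | .inr p => p.1.1

/-- The target (codomain) of a morphism. -/
def mtgt : Mor P Gr → P
  | .inl ⟨i, _⟩ => i
  | .inr p => p.1.2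

/-- The identity morphism at the object `i`. -/
def midm (i : P) : Mor P Gr := .inl ⟨i, 1⟩

/-- Composition of morphisms (left to right), returning the first argument as a junk
value on non-composable pairs. -/
noncomputable def mcomp : Mor P Gr → Mor P Gr → Mor P Gr
  | .inl ⟨i, g⟩, .inl ⟨j, h⟩ =>
      if hij : i = j then .inl ⟨j, (cast (congrArg Gr hij) g) * h⟩ else .inl ⟨i, g⟩
  | .inl _, .inr p => .inr p
  | .inr p, .inl _ => .inr p
  | .inr p, .inr q =>
      if hpq : p.1.2 = q.1.1 then
        .inr ⟨(p.1.1, q.1.2), lt_trans p.2 (by rw [hpq]; exact q.2)⟩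
      else .inr p

/-- The structure constants of the category algebra: `1` on composable pairs, `0`
otherwise. -/
noncomputable def mmu (k : Type) [CommRing k] (a b : Mor P Gr) : k :=
  if mtgt a = msrc b then 1 else 0

/-- Composable tuples of morphisms of `C` (chains in the nerve). -/
def CompT (P : Type) [PartialOrder P] (Gr : P → Type) (n : ℕ) : Type :=
  {φ : Fin n → Mor P Gr //
    ∀ (i : ℕ) (h : i + 1 < n), mtgt (φ ⟨i, by omega⟩) = msrc (φ ⟨i + 1, h⟩)}

variable {A : Type} [Ring A] [Algebra k A]

/-- The ordered product of a tuple of basis elements in the category algebra. -/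
noncomputable def mprod (bas : Module.Basis (Mor P Gr) k A) {n : ℕ} (φ : Fin n → Mor P Gr) : A :=
  (List.ofFn fun i => bas (φ i)).prod

/-- The submodule of autopoietic Hochschild cochains `AP(k[C]^{⊗n}, k[C])`, defined on the
full tensor power over `k`. -/
noncomputable def APfull (bas : Module.Basis (Mor P Gr) k A) (n : ℕ) :
    Submodule k ((Fin n → Mor P Gr) → A) where
  carrier := {f | ∀ φ, ∃ c : k, f φ = c • mprod bas φ}
  add_mem' := by
    intro f f' hf hf' φ
    obtain ⟨c, hc⟩ := hf φ
    obtain ⟨c', hc'⟩ := hf' φ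
    exact ⟨c + c', by simp [hc, hc', add_smul]⟩
  zero_mem' := fun φ => ⟨0, by simp⟩
  smul_mem' := by
    intro c f hf φ
    obtain ⟨c', hc'⟩ := hf φ
    exact ⟨c * c', by simp [hc', mul_smul]⟩

/-- The submodule of autopoietic cochains `AP(k[C]^{⊗_E n}, k[C])`, defined on the tensor
power over the separable subalgebra `E` — i.e. on composable tuples only. -/
noncomputable def APrel (bas : Module.Basis (Mor P Gr) k A) (n : ℕ) :
    Submodule k (CompT P Gr n → A) where
  carrier := {f | ∀ φ : CompT P Gr n, ∃ c : k, f φ = c • mprod bas φ.1}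
  add_mem' := by
    intro f f' hf hf' φ
    obtain ⟨c, hc⟩ := hf φ
    obtain ⟨c', hc'⟩ := hf' φ
    exact ⟨c + c', by simp [hc, hc', add_smul]⟩
  zero_mem' := fun φ => ⟨0, by simp⟩
  smul_mem' := by
    intro c f hf φ
    obtain ⟨c', hc'⟩ := hf φ
    exact ⟨c * c', by simp [hc', mul_smul]⟩

/-- Restriction of cochains from all tuples to composable tuples. -/
noncomputable def restrictAP (bas : Module.Basis (Mor P Gr) k A) (n : ℕ) :
    APfull bas n →ₗ[k] APrel bas n where
  toFun f := ⟨fun φ => f.1 φ.1, fun φ => f.2 φ.1⟩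
  map_add' := by intro f g; rfl
  map_smul' := by intro c f; rfl

theorem List.prod_ofFn_eq_zero_of_mul_eq_zero {M : Type*} [MonoidWithZero M] {n : ℕ}
    (x : Fin n → M) (i : ℕ) (h : i + 1 < n) (hx : x ⟨i, by omega⟩ * x ⟨i + 1, h⟩ = 0) :
    (List.ofFn x).prod = 0 := by
  induction i generalizing n with
  | zero =>
    obtain ⟨m, rfl⟩ : ∃ m, n = m + 2 := ⟨n - 2, by omega⟩
    have hx' : x 0 * x 1 = 0 := hx
    rw [List.ofFn_succ, List.ofFn_succ, List.prod_cons, List.prod_cons, ← mul_assoc,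
      Fin.succ_zero_eq_one, hx', zero_mul]
  | succ i ih =>
    obtain ⟨m, rfl⟩ : ∃ m, n = m + 1 := ⟨n - 1, by omega⟩
    rw [List.ofFn_succ, List.prod_cons, ih (fun j : Fin m => x j.succ) (by omega) hx, mul_zero]

section

variable {k : Type} [CommRing k] {P : Type} [PartialOrder P] {Gr : P → Type}
  {A : Type} [Ring A] [Algebra k A] (bas : Module.Basis (Mor P Gr) k A)

def IsComposable {n : ℕ} (φ : Fin n → Mor P Gr) : Prop :=
  ∀ (i : ℕ) (h : i + 1 < n), mtgt (φ ⟨i, by omega⟩) = msrc (φ ⟨i + 1, h⟩)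

noncomputable def extendByZero {n : ℕ} (g : CompT P Gr n → A) : (Fin n → Mor P Gr) → A :=
  fun φ => if h : IsComposable φ then g ⟨φ, h⟩ else 0

theorem extendByZero_mem_APfull {n : ℕ} {g : CompT P Gr n → A} (hg : g ∈ APrel bas n) :
    extendByZero g ∈ APfull bas n := by
  intro φ
  by_cases hφ : IsComposable φ
  · obtain ⟨c, hc⟩ := hg ⟨φ, hφ⟩
    exact ⟨c, by rw [extendByZero, dif_pos hφ, hc]⟩
  · exact ⟨0, by rw [extendByZero, dif_neg hφ, zero_smul]⟩

theorem restrictAP_surjective (n : ℕ) : Function.Surjective (restrictAP bas n) :=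
  fun g => ⟨⟨extendByZero g.1, extendByZero_mem_APfull bas g.2⟩,
    Subtype.ext (funext fun φ => dif_pos φ.2)⟩

variable [∀ i, Group (Gr i)]

theorem mprod_eq_zero_of_not_isComposable
    (hmul : ∀ a b : Mor P Gr, bas a * bas b = mmu k a b • bas (mcomp a b))
    {n : ℕ} {φ : Fin n → Mor P Gr} (hφ : ¬ IsComposable φ) : mprod bas φ = 0 := by
  obtain ⟨i, h, hne⟩ := not_forall₂.mp hφ
  exact List.prod_ofFn_eq_zero_of_mul_eq_zero _ i h (by rw [hmul, mmu, if_neg hne, zero_smul])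

theorem apply_eq_zero_of_mem_APfull
    (hmul : ∀ a b : Mor P Gr, bas a * bas b = mmu k a b • bas (mcomp a b))
    {n : ℕ} {f : (Fin n → Mor P Gr) → A} (hf : f ∈ APfull bas n)
    {φ : Fin n → Mor P Gr} (hφ : ¬ IsComposable φ) : f φ = 0 := by
  obtain ⟨c, hc⟩ := hf φ
  rw [hc, mprod_eq_zero_of_not_isComposable bas hmul hφ, smul_zero]

theorem restrictAP_injective
    (hmul : ∀ a b : Mor P Gr, bas a * bas b = mmu k a b • bas (mcomp a b)) (n : ℕ) :
    Function.Injective (restrictAP bas n) := by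
  intro f g hfg
  ext φ
  by_cases hφ : IsComposable φ
  · exact congrFun (congrArg Subtype.val hfg) ⟨φ, hφ⟩
  · rw [apply_eq_zero_of_mem_APfull bas hmul f.2 hφ, apply_eq_zero_of_mem_APfull bas hmul g.2 hφ]

end

theorem stmt_16_general (bas : Module.Basis (Mor P Gr) k A)
    (hmul : ∀ a b : Mor P Gr, bas a * bas b = mmu k a b • bas (mcomp a b)) :
    ∀ n : ℕ, Function.Bijective (restrictAP (k := k) bas n) :=
  fun n => ⟨restrictAP_injective bas hmul n, restrictAP_surjective bas n⟩

/-- For the category algebra `k[C]` of an amalgam of groups over a finite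
poset without cycles, restriction induces a `k`-module isomorphism
`AP(k[C]^{⊗n}, k[C]) ≅ AP(k[C]^{⊗_E n}, k[C])` between the autopoietic Hochschild cochains
on the full tensor powers over `k` and those on the tensor powers over the separable
subalgebra `E` of object idempotents. -/
theorem stmt_16 (bas : Module.Basis (Mor P Gr) k A)
    (hmul : ∀ a b : Mor P Gr, bas a * bas b = mmu k a b • bas (mcomp a b))
    (hone : (1 : A) = ∑ i : P, bas (midm i)) :
    ∀ n : ℕ, Function.Bijective (restrictAP (k := k) bas n) :=
  stmt_16_general bas hmul
end
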